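/- Let R be a unital associative ring and δ : R → R a derivation. The differential polynomial ring R[x;id_R,δ] is a simple ring if and only if R is δ-simple and the center Z(R[x;id_R,δ]) is a field. -/

import Mathlib

/-- `δ` is a `σ`-derivation of `R`: it is additive and satisfies the twisted Leibniz rule
`δ(ab) = σ(a)δ(b) + δ(a)b`. -/
def IsSigmaDerivation {R : Type*} [Ring R] (σ : R →+* R) (δ : R → R) : Prop :=
  (∀ a b : R, δ (a + b) = δ a + δ b) ∧ ∀ a b : R, δ (a * b) = σ a * δ b + δ a * b

/-- `S`, together with the ring morphism `f : R →+* S` and the element `x : S`, is an Ore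
extension `R[x;σ,δ]`: the powers `1, x, x², …` form a basis of `S` as a left `R`-module
(i.e. every element of `S` is, in a unique way, a finite sum `Σᵢ f(aᵢ) xⁱ`), and the
commutation rule `x·r = σ(r)·x + δ(r)` holds for all `r ∈ R`. -/
structure IsOreExtension {R S : Type*} [Ring R] [Ring S]
    (σ : R →+* R) (δ : R → R) (f : R →+* S) (x : S) : Prop where
  basis : Function.Bijective fun a : ℕ →₀ R => a.sum fun i r => f r * x ^ i
  rel : ∀ r : R, x * f r = f (σ r) * x + f (δ r)

/-- `R` is `σ`-`δ`-simple: the only two-sided ideals `J` of `R` with `σ(J) ⊆ J` and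
`δ(J) ⊆ J` are `{0}` and `R`. -/
def IsSigmaDeltaSimple {R : Type*} [Ring R] (σ : R →+* R) (δ : R → R) : Prop :=
  ∀ J : TwoSidedIdeal R, (∀ a ∈ J, σ a ∈ J) → (∀ a ∈ J, δ a ∈ J) → J = ⊥ ∨ J = ⊤

/-- `R` is `δ`-simple: the only two-sided ideals `J` of `R` with `δ(J) ⊆ J` are `{0}`
and `R`. -/
def IsDeltaSimple {R : Type*} [Ring R] (δ : R → R) : Prop :=
  ∀ J : TwoSidedIdeal R, (∀ a ∈ J, δ a ∈ J) → J = ⊥ ∨ J = ⊤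

/-!
Reading off coefficients in the basis `1, x, x², …` identifies `S` additively with `R[X]`, and
on coefficients the commutator `s ↦ x·s - s·x` acts as `δ`. Hence a `δ`-invariant ideal `J` of
`R` yields the ideal `J[x]` of `S`, which for simple `S` is `0` or `S`, so `J` is `0` or `R`;
and the centre of a simple ring is a field.

Conversely, let `I` be a nonzero ideal of `S` and `n` the least degree of its nonzero elements.
The `n`-th coefficients of the elements of `I` of degree at most `n` form a `δ`-invariant ideal
of `R`, hence contain `1`: some `q ∈ I` has degree `n` and leading coefficient `1`. The
commutators of `q` with `f r` and with `x` lie in `I` and have degree `< n`, so they vanish and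
`q` is a nonzero central element. As the centre is a field, `q` is a unit and `I = S`.
-/

open Polynomial

namespace IsSigmaDerivation

variable {R : Type*} [Ring R] {σ : R →+* R} {δ : R → R}

theorem map_zero (hδ : IsSigmaDerivation σ δ) : δ 0 = 0 := by
  simpa using hδ.1 0 0

theorem map_one (hδ : IsSigmaDerivation σ δ) : δ 1 = 0 := by
  simpa using hδ.2 1 1

end IsSigmaDerivation

namespace IsOreExtension

variable {R S : Type*} [Ring R] [Ring S] {σ : R →+* R} {δ : R → R} {f : R →+* S} {x : S}

/-- Coordinates in the left `R`-basis `1, x, x², …`, recorded as a polynomial. -/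
noncomputable def repr (hS : IsOreExtension σ δ f x) : S ≃+ R[X] :=
  (AddEquiv.ofBijective
    (AddMonoidHom.mk' (fun p : R[X] => p.sum fun i r => f r * x ^ i)
      fun p q => sum_add_index p q _ (by simp) (by simp [add_mul]))
    (hS.basis.comp ((toFinsuppIso R).toEquiv.trans AddMonoidAlgebra.coeffEquiv).bijective)).symm

section

variable (hS : IsOreExtension σ δ f x)

theorem repr_symm_apply (p : R[X]) : hS.repr.symm p = p.sum fun i r => f r * x ^ i := rfl

theorem sum_repr (s : S) : ∑ i ∈ (hS.repr s).support, f ((hS.repr s).coeff i) * x ^ i = s :=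
  hS.repr.symm_apply_apply s

theorem repr_f_mul_pow (r : R) (i : ℕ) : hS.repr (f r * x ^ i) = monomial i r := by
  rw [← AddEquiv.eq_symm_apply, repr_symm_apply, sum_monomial_index _ _ (by simp)]

theorem repr_f (r : R) : hS.repr (f r) = C r := by
  simpa using hS.repr_f_mul_pow r 0

theorem repr_one : hS.repr 1 = 1 := by
  simpa using hS.repr_f 1

include hS in
theorem f_injective : Function.Injective f := fun a b h =>
  C_injective <| by rw [← hS.repr_f, ← hS.repr_f, h]

theorem repr_f_mul (r : R) (s : S) : hS.repr (f r * s) = C r * hS.repr s := by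
  conv_lhs => rw [← hS.sum_repr s]
  conv_rhs => rw [as_sum_support (hS.repr s)]
  simp only [Finset.mul_sum, ← mul_assoc, ← map_mul, map_sum, repr_f_mul_pow, C_mul_monomial]

theorem repr_mul_x (s : S) : hS.repr (s * x) = hS.repr s * X := by
  conv_lhs => rw [← hS.sum_repr s]
  conv_rhs => rw [as_sum_support (hS.repr s)]
  simp only [Finset.sum_mul, mul_assoc, ← pow_succ, map_sum, repr_f_mul_pow, monomial_mul_X]

theorem repr_mul (s t : S) :
    hS.repr (s * t) = ∑ i ∈ (hS.repr s).support, C ((hS.repr s).coeff i) * hS.repr (x ^ i * t) := by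
  conv_lhs => rw [← hS.sum_repr s]
  simp only [Finset.sum_mul, mul_assoc, map_sum, repr_f_mul]

theorem coeff_repr_mul_mem_right {J : TwoSidedIdeal R} {s : S}
    (hs : ∀ i, (hS.repr s).coeff i ∈ J) (t : S) (j : ℕ) : (hS.repr (s * t)).coeff j ∈ J := by
  rw [hS.repr_mul, finsetSum_coeff]
  exact sum_mem fun i _ => by rw [coeff_C_mul]; exact J.mul_mem_right _ _ (hs i)

include hS in
theorem mem_center_of_commute {q : S} (hf : ∀ r, Commute (f r) q) (hx : Commute x q) :
    q ∈ Subring.center S :=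
  Subring.mem_center_iff.2 fun g => by
    rw [← hS.sum_repr g]
    exact (Commute.sum_left _ _ _ fun i _ => (hf _).mul_left (hx.pow_left i)).eq

end

section Differential

variable (hδ : IsSigmaDerivation (RingHom.id R) δ) (hS : IsOreExtension (RingHom.id R) δ f x)

include hS in
theorem x_mul_f_sub_f_mul_x (r : R) : x * f r - f r * x = f (δ r) := by
  rw [hS.rel r, RingHom.id_apply, add_sub_cancel_left]

include hδ hS

theorem coeff_repr_x_mul_sub_mul_x (s : S) (j : ℕ) :
    (hS.repr (x * s - s * x)).coeff j = δ ((hS.repr s).coeff j) := by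
  have hsum : x * s - s * x = ∑ i ∈ (hS.repr s).support, f (δ ((hS.repr s).coeff i)) * x ^ i := by
    conv_lhs => rw [← hS.sum_repr s]
    rw [Finset.mul_sum, Finset.sum_mul, ← Finset.sum_sub_distrib]
    refine Finset.sum_congr rfl fun i _ => ?_
    rw [← hS.x_mul_f_sub_f_mul_x, sub_mul, mul_assoc, mul_assoc, mul_assoc,
      (Commute.self_pow x i).eq]
  rw [hsum, map_sum]
  simp only [repr_f_mul_pow, finsetSum_coeff, coeff_monomial, Finset.sum_ite_eq']
  split_ifs with h
  · rfl
  · rw [notMem_support_iff.1 h, hδ.map_zero]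

theorem coeff_repr_x_mul (s : S) (j : ℕ) :
    (hS.repr (x * s)).coeff j = (hS.repr s * X).coeff j + δ ((hS.repr s).coeff j) := by
  rw [← hS.repr_mul_x, ← coeff_repr_x_mul_sub_mul_x hδ hS, ← coeff_add, ← map_add,
    add_sub_cancel]

theorem natDegree_repr_x_mul_sub_mul_x_le (s : S) :
    (hS.repr (x * s - s * x)).natDegree ≤ (hS.repr s).natDegree :=
  natDegree_le_iff_coeff_eq_zero.2 fun _ hN => by
    rw [coeff_repr_x_mul_sub_mul_x hδ hS, coeff_eq_zero_of_natDegree_lt hN, hδ.map_zero]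

theorem natDegree_repr_x_pow_mul_f_le_and_coeff_eq (r : R) (i : ℕ) :
    (hS.repr (x ^ i * f r)).natDegree ≤ i ∧ (hS.repr (x ^ i * f r)).coeff i = r := by
  induction i with
  | zero => simp [hS.repr_f]
  | succ i ih =>
    obtain ⟨hdeg, hcoeff⟩ := ih
    rw [pow_succ', mul_assoc]
    refine ⟨natDegree_le_iff_coeff_eq_zero.2 fun N hN => ?_, ?_⟩
    · obtain ⟨k, rfl⟩ := Nat.exists_eq_add_of_lt hN
      rw [coeff_repr_x_mul hδ hS, coeff_mul_X, coeff_eq_zero_of_natDegree_lt (by omega),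
        coeff_eq_zero_of_natDegree_lt (by omega), hδ.map_zero, add_zero]
    · rw [coeff_repr_x_mul hδ hS, coeff_mul_X, hcoeff, coeff_eq_zero_of_natDegree_lt (by omega),
        hδ.map_zero, add_zero]

theorem natDegree_repr_mul_f_le_and_coeff_eq {s : S} {n : ℕ} (hs : (hS.repr s).natDegree ≤ n)
    (r : R) : (hS.repr (s * f r)).natDegree ≤ n ∧
      (hS.repr (s * f r)).coeff n = (hS.repr s).coeff n * r := by
  have hsupp : ∀ i ∈ (hS.repr s).support, i ≤ n := fun i hi =>
    (le_natDegree_of_mem_supp i hi).trans hs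
  have hpow := natDegree_repr_x_pow_mul_f_le_and_coeff_eq hδ hS r
  rw [hS.repr_mul]
  refine ⟨natDegree_sum_le_of_forall_le _ _ fun i hi =>
    (natDegree_C_mul_le _ _).trans ((hpow i).1.trans (hsupp i hi)), ?_⟩
  rw [finsetSum_coeff, Finset.sum_eq_single n, coeff_C_mul, (hpow n).2]
  · intro i hi hin
    rw [coeff_C_mul, coeff_eq_zero_of_natDegree_lt ((hpow i).1.trans_lt
      (lt_of_le_of_ne (hsupp i hi) hin)), mul_zero]
  · intro hn
    rw [notMem_support_iff.1 hn, C_0, zero_mul, coeff_zero]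

theorem coeff_repr_x_pow_mul_mem {J : TwoSidedIdeal R} (hJ : ∀ a ∈ J, δ a ∈ J) {s : S}
    (hs : ∀ i, (hS.repr s).coeff i ∈ J) (n j : ℕ) : (hS.repr (x ^ n * s)).coeff j ∈ J := by
  induction n generalizing j with
  | zero => simpa using hs j
  | succ n ih =>
    rw [pow_succ', mul_assoc, coeff_repr_x_mul hδ hS]
    refine J.add_mem ?_ (hJ _ (ih j))
    cases j with
    | zero => rw [coeff_mul_X_zero]; exact J.zero_mem
    | succ j => rw [coeff_mul_X]; exact ih j

theorem coeff_repr_mul_mem_left {J : TwoSidedIdeal R} (hJ : ∀ a ∈ J, δ a ∈ J) {s : S}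
    (hs : ∀ i, (hS.repr s).coeff i ∈ J) (t : S) (j : ℕ) : (hS.repr (t * s)).coeff j ∈ J := by
  rw [hS.repr_mul, finsetSum_coeff]
  exact sum_mem fun i _ => by
    rw [coeff_C_mul]; exact J.mul_mem_left _ _ (coeff_repr_x_pow_mul_mem hδ hS hJ hs i j)

/-- The ideal `J[x]`. -/
def coeffwiseIdeal (J : TwoSidedIdeal R) (hJ : ∀ a ∈ J, δ a ∈ J) : TwoSidedIdeal S :=
  TwoSidedIdeal.mk' {s | ∀ i, (hS.repr s).coeff i ∈ J}
    (fun i => by simp [J.zero_mem])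
    (fun hs ht i => by simpa using J.add_mem (hs i) (ht i))
    (fun hs i => by simpa using J.neg_mem (hs i))
    (fun hs => coeff_repr_mul_mem_left hδ hS hJ hs _)
    (fun hs => hS.coeff_repr_mul_mem_right hs _)

theorem mem_coeffwiseIdeal {J : TwoSidedIdeal R} {hJ : ∀ a ∈ J, δ a ∈ J} {s : S} :
    s ∈ hS.coeffwiseIdeal hδ J hJ ↔ ∀ i, (hS.repr s).coeff i ∈ J :=
  TwoSidedIdeal.mem_mk' ..

def leadingCoeffIdeal (I : TwoSidedIdeal S) (n : ℕ) : TwoSidedIdeal R :=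
  TwoSidedIdeal.mk' {r | ∃ q ∈ I, (hS.repr q).natDegree ≤ n ∧ (hS.repr q).coeff n = r}
    ⟨0, I.zero_mem, by simp, by simp⟩
    (fun ⟨q, hq, hqn, hqr⟩ ⟨q', hq', hq'n, hq'r⟩ => ⟨q + q', I.add_mem hq hq',
      by simpa using natDegree_add_le_of_degree_le hqn hq'n, by simp [hqr, hq'r]⟩)
    (fun ⟨q, hq, hqn, hqr⟩ => ⟨-q, I.neg_mem hq, by simpa using hqn, by simp [hqr]⟩)
    (fun {r _} ⟨q, hq, hqn, hqr⟩ => ⟨f r * q, I.mul_mem_left _ _ hq,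
      by rw [repr_f_mul]; exact (natDegree_C_mul_le _ _).trans hqn,
      by rw [repr_f_mul, coeff_C_mul, hqr]⟩)
    (fun {_ r} ⟨q, hq, hqn, hqr⟩ => ⟨q * f r, I.mul_mem_right _ _ hq,
      (natDegree_repr_mul_f_le_and_coeff_eq hδ hS hqn r).1,
      by rw [(natDegree_repr_mul_f_le_and_coeff_eq hδ hS hqn r).2, hqr]⟩)

theorem mem_leadingCoeffIdeal {I : TwoSidedIdeal S} {n : ℕ} {r : R} :
    r ∈ hS.leadingCoeffIdeal hδ I n ↔
      ∃ q ∈ I, (hS.repr q).natDegree ≤ n ∧ (hS.repr q).coeff n = r :=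
  TwoSidedIdeal.mem_mk' ..

theorem delta_mem_leadingCoeffIdeal (I : TwoSidedIdeal S) (n : ℕ) :
    ∀ r ∈ hS.leadingCoeffIdeal hδ I n, δ r ∈ hS.leadingCoeffIdeal hδ I n := by
  simp only [mem_leadingCoeffIdeal]
  rintro _ ⟨q, hq, hqn, rfl⟩
  exact ⟨x * q - q * x, I.sub_mem (I.mul_mem_left _ _ hq) (I.mul_mem_right _ _ hq),
    (natDegree_repr_x_mul_sub_mul_x_le hδ hS q).trans hqn, coeff_repr_x_mul_sub_mul_x hδ hS q n⟩

theorem isDeltaSimple_of_isSimpleRing [IsSimpleRing S] : IsDeltaSimple δ := by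
  intro J hJ
  refine or_iff_not_imp_left.2 fun hJ0 => ?_
  obtain ⟨a, ha, ha0⟩ := SetLike.exists_of_lt (bot_lt_iff_ne_bot.2 hJ0)
  have hfa : f a ∈ hS.coeffwiseIdeal hδ J hJ := (mem_coeffwiseIdeal hδ hS).2 fun i => by
    rw [hS.repr_f, coeff_C]
    split_ifs
    exacts [ha, J.zero_mem]
  have hfa0 : f a ≠ 0 := (map_ne_zero_iff f hS.f_injective).2 (by simpa using ha0)
  have h1 := (mem_coeffwiseIdeal hδ hS).1 (IsSimpleRing.one_mem_of_ne_zero_mem _ hfa0 hfa) 0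
  rwa [hS.repr_one, coeff_one_zero, J.one_mem_iff] at h1

theorem exists_mem_center_ne_zero (hR : IsDeltaSimple δ) {I : TwoSidedIdeal S} {p : S}
    (hp : p ∈ I) (hp0 : p ≠ 0) : ∃ q ∈ I, q ≠ 0 ∧ q ∈ Subring.center S := by
  classical
  have hex : ∃ n, ∃ q ∈ I, q ≠ 0 ∧ (hS.repr q).natDegree = n := ⟨_, p, hp, hp0, rfl⟩
  set n := Nat.find hex
  have eq_zero : ∀ q ∈ I, (hS.repr q).natDegree ≤ n → (hS.repr q).coeff n = 0 → q = 0 := by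
    intro q hq hqn hcoeff
    by_contra hq0
    have hlt : (hS.repr q).natDegree < n := hqn.lt_of_ne fun h =>
      hq0 (hS.repr.map_eq_zero_iff.1 (leadingCoeff_eq_zero.1 (by rwa [leadingCoeff, h])))
    exact hlt.not_ge (Nat.find_min' hex ⟨q, hq, hq0, rfl⟩)
  obtain ⟨p', hp', hp'0, hp'n⟩ := Nat.find_spec hex
  have hJ : hS.leadingCoeffIdeal hδ I n = ⊤ := by
    refine (hR _ (delta_mem_leadingCoeffIdeal hδ hS I n)).resolve_left fun hbot => hp'0 ?_
    refine eq_zero p' hp' hp'n.le ?_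
    rw [← TwoSidedIdeal.mem_bot, ← hbot, mem_leadingCoeffIdeal]
    exact ⟨p', hp', hp'n.le, rfl⟩
  obtain ⟨q, hq, hqn, hq1⟩ := (mem_leadingCoeffIdeal hδ hS).1 ((TwoSidedIdeal.one_mem_iff _).2 hJ)
  have hcomm : ∀ y, (hS.repr (y * q - q * y)).natDegree ≤ n →
      (hS.repr (y * q - q * y)).coeff n = 0 → Commute y q := fun y hdeg hcoeff =>
    sub_eq_zero.1 <|
      eq_zero _ (I.sub_mem (I.mul_mem_left _ _ hq) (I.mul_mem_right _ _ hq)) hdeg hcoeff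
  have hmul := natDegree_repr_mul_f_le_and_coeff_eq hδ hS hqn
  refine ⟨q, hq, fun hq0 => hp0 ?_,
    hS.mem_center_of_commute (fun r => hcomm _ ?_ ?_) (hcomm _ ?_ ?_)⟩
  · have h01 : (0 : S) = 1 := by simpa [hq0] using congrArg f hq1
    exact (subsingleton_of_zero_eq_one h01).elim _ _
  · rw [map_sub, hS.repr_f_mul]
    exact (natDegree_sub_le _ _).trans (max_le ((natDegree_C_mul_le _ _).trans hqn) (hmul r).1)
  · rw [map_sub, coeff_sub, hS.repr_f_mul, coeff_C_mul, (hmul r).2, hq1, mul_one, one_mul, sub_self]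
  · exact (natDegree_repr_x_mul_sub_mul_x_le hδ hS q).trans hqn
  · rw [coeff_repr_x_mul_sub_mul_x hδ hS, hq1, hδ.map_one]

theorem isSimpleRing_of_isDeltaSimple (hR : IsDeltaSimple δ) (hZ : IsField (Subring.center S)) :
    IsSimpleRing S := by
  have : Nontrivial S := by
    obtain ⟨a, b, hab⟩ := hZ.exists_pair_ne
    exact ⟨a, b, Subtype.coe_ne_coe.2 hab⟩
  refine .of_eq_bot_or_eq_top fun I => or_iff_not_imp_left.2 fun hI => ?_
  obtain ⟨p, hp, hp0⟩ := SetLike.exists_of_lt (bot_lt_iff_ne_bot.2 hI)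
  obtain ⟨q, hq, hq0, hqZ⟩ := exists_mem_center_ne_zero hδ hS hR hp hp0
  obtain ⟨u, hu⟩ := hZ.mul_inv_cancel (a := ⟨q, hqZ⟩) (Subtype.coe_ne_coe.1 hq0)
  rw [← I.one_mem_iff, ← Subring.coe_one, ← hu]
  exact I.mul_mem_right _ _ hq

end Differential

end IsOreExtension

/-- The differential polynomial ring `R[x;id,δ]` is simple if and only if `R` is
`δ`-simple and the center of `R[x;id,δ]` is a field. -/
theorem stmt_15 {R S : Type*} [Ring R] [Ring S] (δ : R → R)
    (hδ : IsSigmaDerivation (RingHom.id R) δ) (f : R →+* S) (x : S)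
    (hS : IsOreExtension (RingHom.id R) δ f x) :
    IsSimpleRing S ↔ IsDeltaSimple δ ∧ IsField (Subring.center S) := by
  constructor
  · intro _
    exact ⟨hS.isDeltaSimple_of_isSimpleRing hδ, IsSimpleRing.isField_center S⟩
  · rintro ⟨hR, hZ⟩
    exact hS.isSimpleRing_of_isDeltaSimple hδ hR hZ
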